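/- If λ ∈ ℝ satisfies λ > ρ(T), then the operator λ·id − T is invertible, its inverse (λ·id − T)⁻¹ is a positive operator on Lᵖ, and a measurable set A is (λ·id − T)⁻¹-invariant if and only if A is T-invariant. -/

import Mathlib

/-!
For `λ > ρ(T)` some power of `T / λ` has norm `< 1`, so the Neumann series
`S = λ⁻¹ ∑ₙ (T / λ)ⁿ` converges and inverts `λ - T`; it is positive term by term.
Since the functions vanishing off `A` form a closed subspace (the kernel of multiplication
by `1_{Aᶜ}`), every term of the series, hence `S`, preserves each `T`-invariant set.
Conversely `(λ - T) S = 1` gives `T S f = λ S f - f ≥ 0` for `f ≥ 0`, so applying `T` once more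
yields `0 ≤ T f ≤ λ T S f`; if `f` and `S f` vanish off `A`, so does `T f`.
-/

open MeasureTheory ENNReal Filter Set

noncomputable section

namespace PaperAtoms

variable {Ω : Type*} [MeasurableSpace Ω] {μ : MeasureTheory.Measure Ω} {p : ℝ≥0∞} [Fact (1 ≤ p)]

/-- `T` is a positive operator on `Lp`. -/
def IsPositiveOp (T : Lp ℝ p μ →L[ℝ] Lp ℝ p μ) : Prop :=
  ∀ f : Lp ℝ p μ, 0 ≤ f → 0 ≤ T f

/-- A measurable set `A` is `T`-invariant if `T f` vanishes a.e. on `Aᶜ` for every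
nonnegative `f ∈ Lp` vanishing a.e. on `Aᶜ`. -/
def Invariant (T : Lp ℝ p μ →L[ℝ] Lp ℝ p μ) (A : Set Ω) : Prop :=
  MeasurableSet A ∧
    ∀ f : Lp ℝ p μ, 0 ≤ f → (∀ᵐ x ∂μ, x ∉ A → f x = 0) → ∀ᵐ x ∂μ, x ∉ A → T f x = 0

/-- `A` is `T`-co-invariant if `Aᶜ` is `T`-invariant. -/
def CoInvariant (T : Lp ℝ p μ →L[ℝ] Lp ℝ p μ) (A : Set Ω) : Prop :=
  Invariant T Aᶜ

/-- `A` is `T`-admissible if it belongs to the σ-field generated by the `T`-invariant sets. -/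
def Admissible (T : Lp ℝ p μ →L[ℝ] Lp ℝ p μ) (A : Set Ω) : Prop :=
  MeasurableSet[MeasurableSpace.generateFrom {B : Set Ω | Invariant T B}] A

/-- A `T`-atom is a minimal `T`-admissible set with positive measure. -/
def Atom (T : Lp ℝ p μ →L[ℝ] Lp ℝ p μ) (A : Set Ω) : Prop :=
  Admissible T A ∧ 0 < μ A ∧
    ∀ B : Set Ω, Admissible T B → B ≤ᵐ[μ] A → μ B = 0 ∨ B =ᵐ[μ] A

/-- `FA` is (a version of) the future of `A`: the minimal `T`-invariant set containing `A` a.e. -/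
def IsFuture (T : Lp ℝ p μ →L[ℝ] Lp ℝ p μ) (A FA : Set Ω) : Prop :=
  Invariant T FA ∧ A ≤ᵐ[μ] FA ∧
    ∀ B : Set Ω, Invariant T B → A ≤ᵐ[μ] B → FA ≤ᵐ[μ] B

/-- `PA` is (a version of) the past of `A`: the minimal `T`-co-invariant set containing `A` a.e. -/
def IsPast (T : Lp ℝ p μ →L[ℝ] Lp ℝ p μ) (A PA : Set Ω) : Prop :=
  CoInvariant T PA ∧ A ≤ᵐ[μ] PA ∧
    ∀ B : Set Ω, CoInvariant T B → A ≤ᵐ[μ] B → PA ≤ᵐ[μ] B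

/-- `A` is `T`-convex if `A = F(A) ∩ P(A)` a.e. -/
def Convexe (T : Lp ℝ p μ →L[ℝ] Lp ℝ p μ) (A : Set Ω) : Prop :=
  MeasurableSet A ∧
    ∃ FA PA : Set Ω, IsFuture T A FA ∧ IsPast T A PA ∧ A =ᵐ[μ] (FA ∩ PA : Set Ω)

/-- Multiplication by the indicator function of `A`, as a bounded operator on `Lp`
(defined as `0` if `A` is not measurable). -/
def indicatorCLM (μ : MeasureTheory.Measure Ω) (p : ℝ≥0∞) [Fact (1 ≤ p)] (A : Set Ω) :
    Lp ℝ p μ →L[ℝ] Lp ℝ p μ := by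
  classical
  exact if hA : MeasurableSet A then
    LinearMap.mkContinuous
      { toFun := fun f => ((Lp.memLp f).indicator hA).toLp (A.indicator f)
        map_add' := fun f g => by
          rw [← MemLp.toLp_add]
          refine MemLp.toLp_congr _ _ ?_
          filter_upwards [Lp.coeFn_add f g] with x hx
          simp only [Pi.add_apply, Set.indicator_apply, hx]
          split <;> simp
        map_smul' := fun c f => by
          rw [RingHom.id_apply, ← MemLp.toLp_const_smul]
          refine MemLp.toLp_congr _ _ ?_
          filter_upwards [Lp.coeFn_smul c f] with x hx
          simp only [Pi.smul_apply, Set.indicator_apply, hx, smul_eq_mul]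
          split <;> simp }
      1
      (fun f => by
        simp only [LinearMap.coe_mk, AddHom.coe_mk, one_mul]
        rw [Lp.norm_toLp, Lp.norm_def]
        exact ENNReal.toReal_mono (Lp.eLpNorm_ne_top f) (eLpNorm_indicator_le _))
  else 0

/-- The restriction `T_A = 1_A T 1_A` of `T` to a measurable set `A`. -/
def restrictOp (T : Lp ℝ p μ →L[ℝ] Lp ℝ p μ) (A : Set Ω) : Lp ℝ p μ →L[ℝ] Lp ℝ p μ :=
  (indicatorCLM μ p A).comp (T.comp (indicatorCLM μ p A))

/-- The spectral radius of a bounded operator, via Gelfand's formula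
`ρ(T) = inf_n ‖Tⁿ‖^(1/n) = lim_n ‖Tⁿ‖^(1/n)`. -/
def specRadius (T : Lp ℝ p μ →L[ℝ] Lp ℝ p μ) : ℝ :=
  ⨅ n : ℕ, ‖T ^ (n + 1)‖ ^ (((n : ℝ) + 1)⁻¹)

/-- The spectral radius `ρ(A)` of the restriction of `T` to `A`. -/
def rhoSet (T : Lp ℝ p μ →L[ℝ] Lp ℝ p μ) (A : Set Ω) : ℝ :=
  specRadius (restrictOp T A)

/-- A measurable set `A` with `μ A > 0` is `T`-irreducible if the restriction of `T` to `A`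
is irreducible, i.e. every `T_A`-invariant subset of `A` is a.e. trivial. -/
def Irreducible (T : Lp ℝ p μ →L[ℝ] Lp ℝ p μ) (A : Set Ω) : Prop :=
  MeasurableSet A ∧ 0 < μ A ∧
    ∀ B : Set Ω, Invariant (restrictOp T A) B → B ≤ᵐ[μ] A → μ B = 0 ∨ B =ᵐ[μ] A

/-- `T` is power compact if some power `T^k`, `k ≥ 1`, is a compact operator. -/
def PowerCompact (T : Lp ℝ p μ →L[ℝ] Lp ℝ p μ) : Prop :=
  ∃ k : ℕ, 1 ≤ k ∧ IsCompactOperator (⇑(T ^ k))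

/-- `B ≼ A` for atoms: `B ⊆ F(A)` a.e. -/
def Prec (T : Lp ℝ p μ →L[ℝ] Lp ℝ p μ) (B A : Set Ω) : Prop :=
  ∃ FA : Set Ω, IsFuture T A FA ∧ B ≤ᵐ[μ] FA

/-- `B ≺ A` for atoms: `B ⊆ F(A)` a.e. and `B ≠ A` a.e. -/
def PrecStrict (T : Lp ℝ p μ →L[ℝ] Lp ℝ p μ) (B A : Set Ω) : Prop :=
  Prec T B A ∧ ¬ (B =ᵐ[μ] A)

/-- A critical atom: a `T`-atom whose spectral radius equals that of `T`. -/
def CriticalAtom (T : Lp ℝ p μ →L[ℝ] Lp ℝ p μ) (A : Set Ω) : Prop :=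
  Atom T A ∧ rhoSet T A = specRadius T

/-- There is a chain `A = A_0 ≻ A_1 ≻ ⋯ ≻ A_n` of critical atoms starting at `A`. -/
def ChainFrom (T : Lp ℝ p μ →L[ℝ] Lp ℝ p μ) (A : Set Ω) (n : ℕ) : Prop :=
  ∃ c : ℕ → Set Ω, c 0 = A ∧ (∀ i ≤ n, CriticalAtom T (c i)) ∧
    ∀ i < n, PrecStrict T (c (i + 1)) (c i)

/-- The generalized eigenspace `⋃ₖ ker (T - λ id)^k` of `T` at `λ`. -/
def genEigenspace (T : Lp ℝ p μ →L[ℝ] Lp ℝ p μ) (l : ℝ) : Submodule ℝ (Lp ℝ p μ) :=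
  ⨆ k : ℕ, LinearMap.ker ((T - l • (1 : Lp ℝ p μ →L[ℝ] Lp ℝ p μ)) ^ k).toLinearMap

/-- The algebraic multiplicity of `λ` for `T`. -/
def algMult (T : Lp ℝ p μ →L[ℝ] Lp ℝ p μ) (l : ℝ) : ℕ :=
  Module.finrank ℝ ↥(genEigenspace T l)

/-- The set of `k` at which the kernels of `(T - ρ(T) id)^k` stabilize; the ascent of `T`
at `ρ(T)` is its infimum. -/
def ascentSet (T : Lp ℝ p μ →L[ℝ] Lp ℝ p μ) : Set ℕ :=
  {k : ℕ | LinearMap.ker ((T - specRadius T • (1 : Lp ℝ p μ →L[ℝ] Lp ℝ p μ)) ^ k).toLinearMap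
      = LinearMap.ker ((T - specRadius T • (1 : Lp ℝ p μ →L[ℝ] Lp ℝ p μ)) ^ (k + 1)).toLinearMap}

/-- `D` is (a version of) the set `T(C)`, i.e. the support of `T(1_C f)` for any a.e.
positive `f ∈ Lp`. -/
def IsImage (T : Lp ℝ p μ →L[ℝ] Lp ℝ p μ) (C D : Set Ω) : Prop :=
  MeasurableSet C ∧ MeasurableSet D ∧
    ∀ f : Lp ℝ p μ, (∀ᵐ x ∂μ, 0 < f x) →
      D =ᵐ[μ] ({x | T (indicatorCLM μ p C f) x ≠ 0} : Set Ω)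

/-- `D` is (a version of) the `k`-fold iterated image `T^k(C)`. -/
def IsIterImage (T : Lp ℝ p μ →L[ℝ] Lp ℝ p μ) : ℕ → Set Ω → Set Ω → Prop
  | 0, C, D => D = C
  | (k + 1), C, D => ∃ E : Set Ω, IsIterImage T k C E ∧ IsImage T E D

section NeumannSeries

variable {R : Type*} [NormedRing R]

theorem summable_pow_of_norm_pow_lt_one [CompleteSpace R] {x : R} {N : ℕ} (hN : N ≠ 0)
    (h : ‖x ^ N‖ < 1) : Summable (x ^ ·) := by
  have : NeZero N := ⟨hN⟩
  have hgeom : Summable fun k : ℕ => ‖(x ^ N) ^ k‖ := summable_norm_geometric_of_norm_lt_one h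
  have hfin : Summable fun j : Fin N => ‖x ^ (j : ℕ)‖ := .of_finite
  have hnorm := hgeom.mul_norm hfin
  rw [← (Nat.divModEquiv N).symm.summable_iff]
  refine .of_norm (hnorm.congr fun q => ?_)
  simp [← pow_mul, ← pow_add, mul_comm N]

variable [NormedAlgebra ℝ R]

theorem smul_one_sub_eq_smul {a : R} {l : ℝ} (hl : l ≠ 0) :
    l • (1 : R) - a = l • (1 - l⁻¹ • a) := by
  rw [smul_sub, smul_smul, mul_inv_cancel₀ hl, one_smul]

theorem smul_one_sub_mul_smul_tsum {a : R} {l : ℝ} (hl : l ≠ 0)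
    (h : Summable ((l⁻¹ • a) ^ ·)) : (l • (1 : R) - a) * (l⁻¹ • ∑' n, (l⁻¹ • a) ^ n) = 1 := by
  rw [smul_one_sub_eq_smul hl, smul_mul_smul_comm, mul_inv_cancel₀ hl, one_smul,
    h.one_sub_mul_tsum_pow]

theorem smul_tsum_mul_smul_one_sub {a : R} {l : ℝ} (hl : l ≠ 0)
    (h : Summable ((l⁻¹ • a) ^ ·)) : (l⁻¹ • ∑' n, (l⁻¹ • a) ^ n) * (l • (1 : R) - a) = 1 := by
  rw [smul_one_sub_eq_smul hl, smul_mul_smul_comm, inv_mul_cancel₀ hl, one_smul,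
    h.tsum_pow_mul_one_sub]

end NeumannSeries

theorem specRadius_nonneg (T : Lp ℝ p μ →L[ℝ] Lp ℝ p μ) : 0 ≤ specRadius T :=
  Real.iInf_nonneg fun _ => Real.rpow_nonneg (norm_nonneg _) _

theorem exists_norm_pow_lt_one_of_specRadius_lt {T : Lp ℝ p μ →L[ℝ] Lp ℝ p μ} {l : ℝ}
    (hl : specRadius T < l) : ∃ N : ℕ, N ≠ 0 ∧ ‖(l⁻¹ • T) ^ N‖ < 1 := by
  have hl0 : 0 < l := (specRadius_nonneg T).trans_lt hl
  obtain ⟨n, hn⟩ := exists_lt_of_ciInf_lt hl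
  refine ⟨n + 1, n.succ_ne_zero, ?_⟩
  have hpow : ‖T ^ (n + 1)‖ < l ^ (n + 1) := by
    have := pow_lt_pow_left₀ hn (Real.rpow_nonneg (norm_nonneg _) _) n.succ_ne_zero
    rwa [← Nat.cast_succ, Real.rpow_inv_natCast_pow (norm_nonneg _) n.succ_ne_zero] at this
  rwa [smul_pow, norm_smul, norm_pow, Real.norm_of_nonneg (inv_nonneg.2 hl0.le), inv_pow,
    inv_mul_lt_one₀ (pow_pos hl0 _)]

theorem IsPositiveOp.mul {R S : Lp ℝ p μ →L[ℝ] Lp ℝ p μ} (hR : IsPositiveOp R)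
    (hS : IsPositiveOp S) : IsPositiveOp (R * S) :=
  fun f hf => hR _ (hS f hf)

theorem IsPositiveOp.pow {T : Lp ℝ p μ →L[ℝ] Lp ℝ p μ} (hT : IsPositiveOp T) (n : ℕ) :
    IsPositiveOp (T ^ n) := by
  induction n with
  | zero => exact fun f hf => hf
  | succ n ih => exact pow_succ T n ▸ ih.mul hT

theorem IsPositiveOp.smul {T : Lp ℝ p μ →L[ℝ] Lp ℝ p μ} (hT : IsPositiveOp T) {c : ℝ}
    (hc : 0 ≤ c) : IsPositiveOp (c • T) := by
  intro f hf
  have hTf := hT f hf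
  rw [smul_apply, ← Lp.coeFn_nonneg]
  rw [← Lp.coeFn_nonneg] at hTf
  filter_upwards [Lp.coeFn_smul c (T f), hTf] with x hcTf hTfx
  simpa [hcTf] using mul_nonneg hc hTfx

theorem IsPositiveOp.tsum {F : ℕ → Lp ℝ p μ →L[ℝ] Lp ℝ p μ} (hF : ∀ n, IsPositiveOp (F n)) :
    IsPositiveOp (∑' n, F n) := by
  intro f hf
  by_cases hs : Summable F
  · rw [← ContinuousLinearMap.apply_apply (v := f), (ContinuousLinearMap.apply ℝ _ f).map_tsum hs]
    exact tsum_nonneg fun n => hF n f hf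
  · simp [tsum_eq_zero_of_not_summable hs]

theorem indicatorCLM_eq_zero_iff {A : Set Ω} (hA : MeasurableSet A) (g : Lp ℝ p μ) :
    indicatorCLM μ p A g = 0 ↔ ∀ᵐ x ∂μ, x ∈ A → g x = 0 := by
  rw [indicatorCLM, dif_pos hA]
  simp only [LinearMap.mkContinuous_apply, LinearMap.coe_mk, AddHom.coe_mk]
  rw [Lp.eq_zero_iff_ae_eq_zero]
  have hgA := (Lp.memLp g).indicator hA
  have hind := MemLp.coeFn_toLp hgA
  constructor
  · intro h
    filter_upwards [h, hind] with x hx hx' hxA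
    rw [hx'] at hx
    simpa [Set.indicator_of_mem hxA] using hx
  · intro h
    filter_upwards [h, hind] with x hx hx'
    rw [hx']
    by_cases hxA : x ∈ A
    · simpa [Set.indicator_of_mem hxA] using hx hxA
    · simp [Set.indicator_of_notMem hxA]

theorem indicatorCLM_eq_zero_of_nonneg_of_le {A : Set Ω} (hA : MeasurableSet A)
    {g h : Lp ℝ p μ} (hg : 0 ≤ g) (hgh : g ≤ h) (hh : indicatorCLM μ p A h = 0) :
    indicatorCLM μ p A g = 0 := by
  rw [indicatorCLM_eq_zero_iff hA] at hh ⊢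
  rw [← Lp.coeFn_nonneg] at hg
  rw [← Lp.coeFn_le] at hgh
  filter_upwards [hg, hgh, hh] with x hgx hghx hhx hxA
  exact le_antisymm (hghx.trans (hhx hxA).le) hgx

theorem invariant_iff {T : Lp ℝ p μ →L[ℝ] Lp ℝ p μ} {A : Set Ω} (hA : MeasurableSet A) :
    Invariant T A ↔ ∀ f : Lp ℝ p μ, 0 ≤ f →
      indicatorCLM μ p Aᶜ f = 0 → indicatorCLM μ p Aᶜ (T f) = 0 := by
  simp only [Invariant, hA, true_and, indicatorCLM_eq_zero_iff hA.compl, mem_compl_iff]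

section Invariant

variable {A : Set Ω}

theorem Invariant.mul {R S : Lp ℝ p μ →L[ℝ] Lp ℝ p μ} (hS : IsPositiveOp S)
    (hR : Invariant R A) (hS' : Invariant S A) : Invariant (R * S) A := by
  have hA := hR.1
  rw [invariant_iff hA] at hR hS' ⊢
  exact fun f hf hfA => hR _ (hS f hf) (hS' f hf hfA)

theorem Invariant.pow {T : Lp ℝ p μ →L[ℝ] Lp ℝ p μ} (hT : IsPositiveOp T) (h : Invariant T A) :
    ∀ n, Invariant (T ^ n) A
  | 0 => ⟨h.1, fun f _ hf => by simpa using hf⟩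
  | n + 1 => pow_succ T n ▸ (h.pow hT n).mul hT h

theorem Invariant.smul {T : Lp ℝ p μ →L[ℝ] Lp ℝ p μ} (h : Invariant T A) (c : ℝ) :
    Invariant (c • T) A := by
  have hA := h.1
  rw [invariant_iff hA] at h ⊢
  intro f hf hfA
  rw [smul_apply, map_smul, h f hf hfA, smul_zero]

theorem Invariant.tsum {F : ℕ → Lp ℝ p μ →L[ℝ] Lp ℝ p μ} (hF : ∀ n, Invariant (F n) A) :
    Invariant (∑' n, F n) A := by
  simp only [invariant_iff (hF 0).1] at hF ⊢
  intro f hf hfA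
  by_cases hs : Summable F
  · have hsf := (ContinuousLinearMap.apply ℝ _ f).summable hs
    rw [← ContinuousLinearMap.apply_apply (v := f), (ContinuousLinearMap.apply ℝ _ f).map_tsum hs,
      (indicatorCLM μ p Aᶜ).map_tsum hsf]
    simp [hF _ f hf hfA]
  · simp [tsum_eq_zero_of_not_summable hs]

theorem Invariant.of_smul_one_sub_mul_eq_one {T S : Lp ℝ p μ →L[ℝ] Lp ℝ p μ} {l : ℝ}
    (hT : IsPositiveOp T) (hS : IsPositiveOp S) (hTS : (l • 1 - T) * S = 1)
    (h : Invariant S A) : Invariant T A := by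
  have hA := h.1
  rw [invariant_iff hA] at h ⊢
  intro f hf hfA
  have hTSf : T (S f) = l • S f - f := by
    have hf' : l • S f - T (S f) = f := congrArg (· f) hTS
    exact eq_sub_of_add_eq' (sub_eq_iff_eq_add.mp hf').symm
  have hTf_le : T f ≤ l • T (S f) := by
    have hTTSf : T (T (S f)) = l • T (S f) - T f := by rw [← map_smul, ← map_sub, ← hTSf]
    exact sub_nonneg.mp (hTTSf ▸ hT _ (hT _ (hS f hf)))
  have hPTSf : indicatorCLM μ p Aᶜ (l • T (S f)) = 0 := by
    rw [hTSf, map_smul, map_sub, map_smul, h f hf hfA, hfA, smul_zero, sub_zero, smul_zero]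
  exact indicatorCLM_eq_zero_of_nonneg_of_le hA.compl (hT f hf) hTf_le hPTSf

end Invariant

variable {Ω : Type*} [MeasurableSpace Ω] {μ : MeasureTheory.Measure Ω} {p : ℝ≥0∞}

theorem statement9_general [Fact (1 ≤ p)]
    (T : Lp ℝ p μ →L[ℝ] Lp ℝ p μ) (hT : IsPositiveOp T)
    (l : ℝ) (hl : specRadius T < l) :
    ∃ S : Lp ℝ p μ →L[ℝ] Lp ℝ p μ,
      (l • (1 : Lp ℝ p μ →L[ℝ] Lp ℝ p μ) - T) * S = 1 ∧
      S * (l • (1 : Lp ℝ p μ →L[ℝ] Lp ℝ p μ) - T) = 1 ∧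
      IsPositiveOp S ∧
      ∀ A : Set Ω, Invariant S A ↔ Invariant T A := by
  have hl0 : 0 < l := (specRadius_nonneg T).trans_lt hl
  obtain ⟨N, hN, hTN⟩ := exists_norm_pow_lt_one_of_specRadius_lt hl
  have hsum := summable_pow_of_norm_pow_lt_one hN hTN
  have hT' : IsPositiveOp (l⁻¹ • T) := hT.smul (inv_nonneg.2 hl0.le)
  have hS : IsPositiveOp (l⁻¹ • ∑' n, (l⁻¹ • T) ^ n) :=
    (IsPositiveOp.tsum hT'.pow).smul (inv_nonneg.2 hl0.le)
  have hTS := smul_one_sub_mul_smul_tsum hl0.ne' hsum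
  refine ⟨_, hTS, smul_tsum_mul_smul_one_sub hl0.ne' hsum, hS, fun A => ⟨?_, ?_⟩⟩
  · exact .of_smul_one_sub_mul_eq_one hT hS hTS
  · exact fun h => (Invariant.tsum ((h.smul _).pow hT')).smul _

theorem statement9 [SigmaFinite μ] (hμ : μ Set.univ ≠ 0) [Fact (1 ≤ p)]
    (hp : 1 < p) (hp' : p ≠ ∞)
    (T : Lp ℝ p μ →L[ℝ] Lp ℝ p μ) (hT : IsPositiveOp T)
    (l : ℝ) (hl : specRadius T < l) :
    ∃ S : Lp ℝ p μ →L[ℝ] Lp ℝ p μ,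
      (l • (1 : Lp ℝ p μ →L[ℝ] Lp ℝ p μ) - T) * S = 1 ∧
      S * (l • (1 : Lp ℝ p μ →L[ℝ] Lp ℝ p μ) - T) = 1 ∧
      IsPositiveOp S ∧
      ∀ A : Set Ω, Invariant S A ↔ Invariant T A :=
  statement9_general T hT l hl

end PaperAtoms
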